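/- Let (G,∘) be a group. The assignment · ↦ ρ·(G) is a bijection from the set of group operations · on G such that (G,·,∘) is a skew brace onto the set of regular subgroups of Perm(G) that are normalised by λ∘(G). -/

import Mathlib

def IsSkewBrace {G : Type*} (dot circ : Group G) : Prop :=
  ∀ σ τ κ : G,
    circ.mul σ (dot.mul τ κ) =
      dot.mul (dot.mul (circ.mul σ τ) (dot.inv σ)) (circ.mul σ κ)

def gammaFun {G : Type*} (dot circ : Group G) (σ τ : G) : G :=
  dot.mul (dot.inv σ) (circ.mul σ τ)

def IsSubgroupOf {G : Type*} (S : Group G) (H : Set G) : Prop :=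
  S.one ∈ H ∧ (∀ a ∈ H, ∀ b ∈ H, S.mul a b ∈ H) ∧ (∀ a ∈ H, S.inv a ∈ H)

def IsLeftIdeal {G : Type*} (dot circ : Group G) (H : Set G) : Prop :=
  IsSubgroupOf dot H ∧ ∀ σ : G, ∀ τ ∈ H, gammaFun dot circ σ τ ∈ H

def IsStrongLeftIdeal {G : Type*} (dot circ : Group G) (H : Set G) : Prop :=
  IsLeftIdeal dot circ H ∧
    ∀ σ : G, ∀ τ ∈ H, dot.mul (dot.mul σ τ) (dot.inv σ) ∈ H

def IsCharacteristicSubgroupOf {G : Type*} (S : Group G) (H : Set G) : Prop :=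
  IsSubgroupOf S H ∧
    ∀ f : G ≃ G, (∀ a b : G, f (S.mul a b) = S.mul (f a) (f b)) → ∀ a ∈ H, f a ∈ H

def oppGroup {G : Type*} (dot : Group G) : Group G :=
  letI := dot
  { mul := fun a b => b * a
    one := (1 : G)
    inv := fun a => a⁻¹
    div := fun a b => b⁻¹ * a
    div_eq_mul_inv := fun _ _ => rfl
    mul_assoc := fun a b c => (mul_assoc c b a).symm
    one_mul := fun a => mul_one a
    mul_one := fun a => one_mul a
    inv_mul_cancel := fun a => mul_inv_cancel a
    npow := fun n x => @npowRec G ⟨(1 : G)⟩ ⟨fun a b => b * a⟩ n x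
    npow_zero := fun _ => rfl
    npow_succ := fun _ _ => rfl
    zpow := fun n x => @zpowRec G ⟨(1 : G)⟩ ⟨fun a b => b * a⟩ ⟨fun a => a⁻¹⟩
      (@npowRec G ⟨(1 : G)⟩ ⟨fun a b => b * a⟩) n x
    zpow_zero' := fun _ => rfl
    zpow_succ' := fun _ _ => rfl
    zpow_neg' := fun _ _ => rfl }

def lam {G : Type*} (S : Group G) (σ : G) : Equiv.Perm G :=
  letI := S; Equiv.mulLeft σ

def rho {G : Type*} (S : Group G) (σ : G) : Equiv.Perm G :=
  letI := S; Equiv.mulRight σ⁻¹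

/-!
For a skew brace the two identities agree, `ρ·(σ)(1) = σ⁻¹` makes `ρ·(G)` regular, and the
brace identity is exactly `λ∘(σ) ρ·(τ) λ∘(σ)⁻¹ = ρ·(γ_σ(τ⁻¹)⁻¹)`, so `λ∘(G)` normalises
`ρ·(G)`. A group law is recovered from its identity and `ρ·(G)` as `a · b = ρ·(b⁻¹)(a)`.
Conversely, a regular subgroup `N` has for each `b` a unique `δ_b ∈ N` with `δ_b(1) = b`, and
`a · b := δ_b(a)` is a group law with `ρ·(G) = N`; writing `λ∘(σ) δ_κ λ∘(σ)⁻¹ = δ_c` and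
evaluating at `σ ∘ τ` and at `σ` gives the brace identity.
-/

open Function Set

section RegularRepresentation

variable {G : Type*}

theorem rho_apply_one (S : Group G) (σ : G) : rho S σ S.one = S.inv σ := by
  let := S; exact one_mul σ⁻¹

theorem rho_inv_apply (S : Group G) (σ x : G) : rho S (S.inv σ) x = S.mul x σ := by
  let := S; exact congrArg (x * ·) (inv_inv σ)

theorem rho_mul (S : Group G) (σ τ : G) : rho S (S.mul σ τ) = rho S σ * rho S τ := by
  let := S
  ext x
  show x * (σ * τ)⁻¹ = x * τ⁻¹ * σ⁻¹
  rw [mul_inv_rev, mul_assoc]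

theorem lam_inv (S : Group G) (σ : G) : (lam S σ)⁻¹ = lam S (S.inv σ) := by
  let := S; exact Equiv.mulLeft_symm σ

theorem isSubgroupOf_range_rho (S : Group G) :
    IsSubgroupOf inferInstance (range (rho S)) := by
  let := S
  let φ : G →* Equiv.Perm G := MonoidHom.mk' (rho S) (rho_mul S)
  rw [show range (rho S) = φ.range from (MonoidHom.coe_range φ).symm]
  exact ⟨φ.range.one_mem, fun _ ha _ hb => φ.range.mul_mem ha hb, fun _ ha => φ.range.inv_mem ha⟩

theorem bijOn_eval_one_range_rho (S : Group G) :
    BijOn (fun η : Equiv.Perm G => η S.one) (range (rho S)) univ := by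
  let := S
  refine ⟨mapsTo_univ _ _, ?_, fun σ _ => ⟨rho S σ⁻¹, mem_range_self _, ?_⟩⟩
  · rintro _ ⟨σ, rfl⟩ _ ⟨τ, rfl⟩ h
    simp only [rho_apply_one] at h
    exact congrArg (rho S) (inv_injective h)
  · simp only [rho_apply_one]
    exact inv_inv σ

theorem Group.eq_of_range_rho_eq {S T : Group G} (hone : S.one = T.one)
    (h : range (rho S) = range (rho T)) : S = T := by
  ext σ τ
  show S.mul σ τ = T.mul σ τ
  obtain ⟨κ, hκ⟩ : rho S (S.inv τ) ∈ range (rho T) := h ▸ mem_range_self _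
  have hτ : T.inv κ = τ := by
    rw [← rho_apply_one, ← hone, hκ, rho_inv_apply]
    let := S; exact one_mul τ
  calc S.mul σ τ = rho S (S.inv τ) σ := (rho_inv_apply S τ σ).symm
    _ = rho T κ σ := by rw [hκ]
    _ = T.mul σ τ := by rw [← hτ]; rfl

end RegularRepresentation

theorem image_conj_eq_of_forall_mem {K : Type*} [Group K] {N : Set K} {g : K}
    (h : ∀ η ∈ N, g * η * g⁻¹ ∈ N) (h' : ∀ η ∈ N, g⁻¹ * η * g ∈ N) :
    (fun η => g * η * g⁻¹) '' N = N :=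
  (image_subset_iff.2 h).antisymm fun η hη => ⟨g⁻¹ * η * g, h' η hη, by group⟩

namespace IsSkewBrace

variable {G : Type*} {dot circ : Group G}

theorem one_eq (h : IsSkewBrace dot circ) : dot.one = circ.one := by
  have circ_one_mul : ∀ x, circ.mul circ.one x = x := by let := circ; exact one_mul
  let := dot
  have h₁ : circ.mul circ.one (1 * 1) = circ.mul circ.one 1 * circ.one⁻¹ * circ.mul circ.one 1 :=
    h _ _ _
  simp only [circ_one_mul, mul_one, one_mul] at h₁
  exact (inv_eq_one.1 h₁.symm).symm

theorem lam_mul_rho_mul_lam_inv (h : IsSkewBrace dot circ) (σ τ : G) :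
    lam circ σ * rho dot τ * (lam circ σ)⁻¹ =
      rho dot (dot.inv (gammaFun dot circ σ (dot.inv τ))) := by
  ext x
  obtain ⟨y, rfl⟩ := (lam circ σ).surjective x
  simp only [Equiv.Perm.mul_apply, Equiv.Perm.inv_def, Equiv.symm_apply_apply]
  let := dot
  calc circ.mul σ (y * τ⁻¹) = circ.mul σ y * σ⁻¹ * circ.mul σ τ⁻¹ := h _ _ _
    _ = circ.mul σ y * (σ⁻¹ * circ.mul σ τ⁻¹)⁻¹⁻¹ := by rw [inv_inv, mul_assoc]

theorem image_conj_range_rho (h : IsSkewBrace dot circ) (σ : G) :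
    (fun π : Equiv.Perm G => lam circ σ * π * (lam circ σ)⁻¹) '' range (rho dot) =
      range (rho dot) := by
  refine image_conj_eq_of_forall_mem ?_ ?_ <;> rintro _ ⟨τ, rfl⟩
  · rw [h.lam_mul_rho_mul_lam_inv]
    exact mem_range_self _
  · rw [← inv_inv (lam circ σ), lam_inv, inv_inv, h.lam_mul_rho_mul_lam_inv]
    exact mem_range_self _

end IsSkewBrace

section RegularSubgroup

variable {G : Type*} {N : Set (Equiv.Perm G)} {e : G}

noncomputable def regularPerm (N : Set (Equiv.Perm G)) (e : G) : G → Equiv.Perm G :=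
  invFunOn (fun η : Equiv.Perm G => η e) N

theorem regularPerm_mem (hN : BijOn (fun η : Equiv.Perm G => η e) N univ) (b : G) :
    regularPerm N e b ∈ N :=
  invFunOn_mem (hN.surjOn (mem_univ b))

theorem regularPerm_apply_base (hN : BijOn (fun η : Equiv.Perm G => η e) N univ) (b : G) :
    regularPerm N e b e = b :=
  invFunOn_eq (f := fun η : Equiv.Perm G => η e) (hN.surjOn (mem_univ b))

theorem regularPerm_apply_base_eq (hN : BijOn (fun η : Equiv.Perm G => η e) N univ)
    {η : Equiv.Perm G} (hη : η ∈ N) : regularPerm N e (η e) = η :=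
  hN.injOn.leftInvOn_invFunOn hη

theorem range_regularPerm (hN : BijOn (fun η : Equiv.Perm G => η e) N univ) :
    range (regularPerm N e) = N :=
  (range_subset_iff.2 (regularPerm_mem hN)).antisymm fun η hη =>
    ⟨η e, regularPerm_apply_base_eq hN hη⟩

theorem regularPerm_mul (hsub : IsSubgroupOf inferInstance N)
    (hN : BijOn (fun η : Equiv.Perm G => η e) N univ) (b c : G) :
    regularPerm N e c * regularPerm N e b = regularPerm N e (regularPerm N e c b) := by
  have hmem : regularPerm N e c * regularPerm N e b ∈ N :=
    hsub.2.1 _ (regularPerm_mem hN c) _ (regularPerm_mem hN b)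
  rw [← regularPerm_apply_base_eq hN hmem, Equiv.Perm.mul_apply, regularPerm_apply_base hN]

theorem regularPerm_base (hsub : IsSubgroupOf inferInstance N)
    (hN : BijOn (fun η : Equiv.Perm G => η e) N univ) : regularPerm N e e = 1 :=
  regularPerm_apply_base_eq hN hsub.1

noncomputable def regularGroup (hsub : IsSubgroupOf inferInstance N)
    (hN : BijOn (fun η : Equiv.Perm G => η e) N univ) : Group G where
  mul a b := regularPerm N e b a
  one := e
  inv a := (regularPerm N e a)⁻¹ e
  mul_assoc a b c := by
    show regularPerm N e c (regularPerm N e b a) = regularPerm N e (regularPerm N e c b) a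
    rw [← regularPerm_mul hsub hN]
    rfl
  one_mul := regularPerm_apply_base hN
  mul_one a := by
    show regularPerm N e e a = a
    rw [regularPerm_base hsub hN]
    rfl
  inv_mul_cancel a := (regularPerm N e a).apply_symm_apply e

theorem rho_regularGroup (hsub : IsSubgroupOf inferInstance N)
    (hN : BijOn (fun η : Equiv.Perm G => η e) N univ) (σ : G) :
    rho (regularGroup hsub hN) σ = regularPerm N e ((regularGroup hsub hN).inv σ) :=
  Equiv.ext fun _ => rfl

theorem range_rho_regularGroup (hsub : IsSubgroupOf inferInstance N)
    (hN : BijOn (fun η : Equiv.Perm G => η e) N univ) :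
    range (rho (regularGroup hsub hN)) = N := by
  let := regularGroup hsub hN
  rw [funext (rho_regularGroup hsub hN)]
  exact (inv_surjective.range_comp (regularPerm N e)).trans (range_regularPerm hN)

theorem isSkewBrace_regularGroup {circ : Group G} (hsub : IsSubgroupOf inferInstance N)
    (hN : BijOn (fun η : Equiv.Perm G => η circ.one) N univ)
    (hconj : ∀ σ, ∀ η ∈ N, lam circ σ * η * (lam circ σ)⁻¹ ∈ N) :
    IsSkewBrace (regularGroup hsub hN) circ := by
  intro σ τ κ
  set δ := regularPerm N circ.one
  obtain ⟨c, hc⟩ : ∃ c, lam circ σ * δ κ * (lam circ σ)⁻¹ = δ c :=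
    ⟨_, (regularPerm_apply_base_eq hN (hconj σ _ (regularPerm_mem hN κ))).symm⟩
  have hcomm : ∀ y, circ.mul σ (δ κ y) = δ c (circ.mul σ y) := fun y => by
    rw [← hc]
    show _ = (lam circ σ * δ κ * (lam circ σ)⁻¹) (lam circ σ y)
    simp only [Equiv.Perm.mul_apply, Equiv.Perm.inv_def, Equiv.symm_apply_apply]
    rfl
  have hκ : circ.mul σ κ = δ c σ := by
    have circ_mul_one : circ.mul σ circ.one = σ := by let := circ; exact mul_one σ
    have hκ_one : δ κ circ.one = κ := regularPerm_apply_base hN κ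
    simpa only [hκ_one, circ_mul_one] using hcomm circ.one
  let := regularGroup hsub hN
  calc circ.mul σ (τ * κ) = δ c (circ.mul σ τ) := hcomm τ
    _ = circ.mul σ τ * c := rfl
    _ = circ.mul σ τ * σ⁻¹ * (σ * c) := by group
    _ = circ.mul σ τ * σ⁻¹ * circ.mul σ κ := by rw [hκ]; rfl

end RegularSubgroup

/-- For a group `(G,∘)`, the assignment `· ↦ ρ·(G)` is a bijection
from group operations `·` on `G` making `(G,·,∘)` a skew brace onto the regular
subgroups of `Perm G` normalised by `λ∘(G)`. -/
theorem stmt1 {G : Type*} (circ : Group G) :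
    Set.BijOn (fun dot : Group G => Set.range (rho dot))
      {dot : Group G | IsSkewBrace dot circ}
      {N : Set (Equiv.Perm G) |
        IsSubgroupOf inferInstance N ∧
        Set.BijOn (fun η : Equiv.Perm G => η circ.one) N Set.univ ∧
        ∀ σ : G, (fun π : Equiv.Perm G => lam circ σ * π * (lam circ σ)⁻¹) '' N = N} := by
  refine ⟨fun dot hdot => ?_, fun S hS T hT hST => ?_, fun N ⟨hsub, hN, hconj⟩ => ?_⟩
  · refine ⟨isSubgroupOf_range_rho dot, ?_, hdot.image_conj_range_rho⟩
    rw [← hdot.one_eq]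
    exact bijOn_eval_one_range_rho dot
  · exact Group.eq_of_range_rho_eq (hS.one_eq.trans hT.one_eq.symm) hST
  · have hconj' : ∀ σ, ∀ η ∈ N, lam circ σ * η * (lam circ σ)⁻¹ ∈ N := fun σ η hη =>
      hconj σ ▸ mem_image_of_mem _ hη
    exact ⟨regularGroup hsub hN, isSkewBrace_regularGroup hsub hN hconj',
      range_rho_regularGroup hsub hN⟩
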